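/- Let m ≥ 1 and let P(x) = Σ_{k=0}^{m} A_k x^k and Q(x) = Σ_{k=0}^{m} B_k x^k be coprime real polynomials with Q(x) > 0 for all x ≥ 0 and deg Q = m. Define r(ξ) = P(|ξ|²)/Q(|ξ|²) for ξ ∈ ℂ (a rotationally symmetric rational support function) and let w ∈ ℝ. Then r(ξ) + r(−1/conj ξ) = w for all ξ ≠ 0 if and only if: (1) Q is palindromic, i.e. B_k = B_{m−k} for all 0 ≤ k ≤ m, and (2) A_k + A_{m−k} = w·B_k for all 0 ≤ k ≤ m. -/

import Mathlib

/-!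
Put `t = |ξ|²`; the antipodal map sends `t` to `t⁻¹`, so constant width says
`P(t)/Q(t) + P(t⁻¹)/Q(t⁻¹) = w` for all `t > 0`. Multiplying by `tᵐ Q(t) Q(t⁻¹)` turns this into
the polynomial identity `P Q* + P* Q = w Q Q*`, where `F* = Xᵐ F(X⁻¹)` is the reflection
`Polynomial.reflect m F`. Coprimality gives `Q ∣ Q*`; as `deg Q* ≤ m = deg Q`, `Q* = c Q`, and
evaluating at `1` (where `Q(1) > 0`) gives `c = 1`. Cancelling `Q` then leaves `P + P* = w Q`.
Reading off coefficients, `Q* = Q` and `P + P* = w Q` are exactly the two conditions.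
-/

open Complex Polynomial

namespace Polynomial

section Semiring

variable {R : Type*} [Semiring R]

theorem coeff_sum_range_C_mul_X_pow (m : ℕ) (f : ℕ → R) (j : ℕ) :
    (∑ k ∈ Finset.range (m + 1), C (f k) * X ^ k).coeff j = if j ≤ m then f j else 0 := by
  simp only [finsetSum_coeff, coeff_C_mul, coeff_X_pow, mul_ite, mul_one, mul_zero,
    Finset.sum_ite_eq, Finset.mem_range, Nat.lt_succ_iff]

theorem natDegree_sum_range_C_mul_X_pow_le (m : ℕ) (f : ℕ → R) :
    (∑ k ∈ Finset.range (m + 1), C (f k) * X ^ k).natDegree ≤ m :=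
  natDegree_le_iff_coeff_eq_zero.mpr fun j hj => by
    rw [coeff_sum_range_C_mul_X_pow, if_neg (by omega)]

theorem reflect_eq_self_iff {p : R[X]} {N : ℕ} (hp : p.natDegree ≤ N) :
    reflect N p = p ↔ ∀ k ≤ N, p.coeff k = p.coeff (N - k) := by
  rw [ext_iff_natDegree_le (natDegree_reflect_le.trans (max_le le_rfl hp)) hp]
  refine forall₂_congr fun k hk => ?_
  rw [coeff_reflect, revAt_le hk, eq_comm]

theorem add_reflect_eq_C_mul_iff {p q : R[X]} {N : ℕ} {w : R} (hp : p.natDegree ≤ N)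
    (hq : q.natDegree ≤ N) :
    p + reflect N p = C w * q ↔ ∀ k ≤ N, p.coeff k + p.coeff (N - k) = w * q.coeff k := by
  rw [ext_iff_natDegree_le
    (natDegree_add_le_of_degree_le hp (natDegree_reflect_le.trans (max_le le_rfl hp)))
    (natDegree_C_mul_le w q |>.trans hq)]
  refine forall₂_congr fun k hk => ?_
  rw [coeff_add, coeff_reflect, revAt_le hk, coeff_C_mul]

end Semiring

section Field

variable {K : Type*} [Field K]

theorem eval_reflect {p : K[X]} {N : ℕ} (hp : p.natDegree ≤ N) {t : K} (ht : t ≠ 0) :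
    (reflect N p).eval t = t ^ N * p.eval t⁻¹ := by
  let := invertibleOfNonzero (inv_ne_zero ht)
  have h := eval₂_reflect_mul_pow (RingHom.id K) t⁻¹ N p hp
  rw [invOf_eq_inv, inv_inv] at h
  rw [← eval₂_id, ← eval₂_id, ← h, inv_pow, mul_left_comm, mul_inv_cancel₀ (pow_ne_zero N ht),
    mul_one]

theorem reflect_eq_self_of_dvd {Q : K[X]} {m : ℕ} (hQ : Q.natDegree = m) (hQ1 : Q.eval 1 ≠ 0)
    (hdvd : Q ∣ reflect m Q) : reflect m Q = Q := by
  obtain ⟨u, hu⟩ := hdvd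
  have hQ0 : Q ≠ 0 := fun h => hQ1 (by rw [h, eval_zero])
  have hu0 : u ≠ 0 := by
    rintro rfl
    rw [mul_zero, reflect_eq_zero_iff] at hu
    exact hQ0 hu
  have hu_const : u.natDegree = 0 := by
    have := natDegree_reflect_le (N := m) (p := Q)
    rw [hu, natDegree_mul hQ0 hu0, hQ, max_self] at this
    omega
  obtain ⟨c, rfl⟩ := natDegree_eq_zero.mp hu_const
  have hc : c = 1 := by
    have := eval_reflect hQ.le (one_ne_zero (α := K))
    rw [hu, one_pow, inv_one, one_mul, eval_mul, eval_C] at this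
    exact (mul_eq_left₀ hQ1).mp this
  rw [hu, hc, C_1, mul_one]

theorem mul_reflect_add_reflect_mul_eq_iff {P Q : K[X]} {m : ℕ} {w : K} (hPQ : IsCoprime P Q)
    (hQ : Q.natDegree = m) (hQ1 : Q.eval 1 ≠ 0) :
    P * reflect m Q + reflect m P * Q = C w * (Q * reflect m Q) ↔
      reflect m Q = Q ∧ P + reflect m P = C w * Q := by
  constructor
  · intro h
    have hQQ : reflect m Q = Q := by
      refine reflect_eq_self_of_dvd hQ hQ1 (hPQ.symm.dvd_of_dvd_mul_left ?_)
      exact ⟨C w * reflect m Q - reflect m P, by linear_combination h⟩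
    refine ⟨hQQ, ?_⟩
    have hQ0 : Q ≠ 0 := fun h => hQ1 (by rw [h, eval_zero])
    rw [hQQ] at h
    refine mul_left_cancel₀ hQ0 ?_
    linear_combination h
  · rintro ⟨hQQ, hPP⟩
    rw [hQQ]
    linear_combination Q * hPP

theorem div_add_div_inv_eq_iff_eval_eq {P Q : K[X]} {m : ℕ} {w t : K} (hP : P.natDegree ≤ m)
    (hQ : Q.natDegree ≤ m) (ht : t ≠ 0) (hQt : Q.eval t ≠ 0) (hQt' : Q.eval t⁻¹ ≠ 0) :
    P.eval t / Q.eval t + P.eval t⁻¹ / Q.eval t⁻¹ = w ↔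
      (P * reflect m Q + reflect m P * Q).eval t = (C w * (Q * reflect m Q)).eval t := by
  simp only [eval_add, eval_mul, eval_C, eval_reflect hP ht, eval_reflect hQ ht]
  rw [div_add_div _ _ hQt hQt', div_eq_iff (mul_ne_zero hQt hQt'),
    ← mul_right_inj' (pow_ne_zero m ht)]
  constructor <;> intro h <;> linear_combination h

end Field

theorem forall_pos_div_add_div_inv_eq_iff {K : Type*} [Field K] [LinearOrder K]
    [IsStrictOrderedRing K] {P Q : K[X]} {m : ℕ} {w : K} (hP : P.natDegree ≤ m)
    (hQ : Q.natDegree ≤ m) (hQpos : ∀ t, 0 < t → Q.eval t ≠ 0) :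
    (∀ t : K, 0 < t → P.eval t / Q.eval t + P.eval t⁻¹ / Q.eval t⁻¹ = w) ↔
      P * reflect m Q + reflect m P * Q = C w * (Q * reflect m Q) := by
  have key : ∀ t : K, 0 < t → (P.eval t / Q.eval t + P.eval t⁻¹ / Q.eval t⁻¹ = w ↔
      (P * reflect m Q + reflect m P * Q).eval t = (C w * (Q * reflect m Q)).eval t) :=
    fun t ht => div_add_div_inv_eq_iff_eval_eq hP hQ ht.ne' (hQpos t ht)
      (hQpos t⁻¹ (inv_pos.mpr ht))
  refine ⟨fun h => eq_of_infinite_eval_eq _ _ ((Set.Ioi_infinite 0).mono fun t ht => ?_),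
    fun h t ht => (key t ht).mpr (by rw [h])⟩
  exact (key t ht).mp (h t ht)

end Polynomial

namespace Complex

theorem forall_ne_zero_normSq_iff {p : ℝ → Prop} :
    (∀ ξ : ℂ, ξ ≠ 0 → p (normSq ξ)) ↔ ∀ t : ℝ, 0 < t → p t := by
  refine ⟨fun h t ht => ?_, fun h ξ hξ => h _ (normSq_pos.mpr hξ)⟩
  have := h (Real.sqrt t) (ofReal_ne_zero.mpr (Real.sqrt_pos.mpr ht).ne')
  rwa [normSq_ofReal, Real.mul_self_sqrt ht.le] at this

theorem normSq_neg_one_div_conj (ξ : ℂ) :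
    normSq (-1 / (starRingEnd ℂ) ξ) = (normSq ξ)⁻¹ := by
  rw [neg_div, normSq_neg, map_div₀, normSq_conj, map_one, one_div]

end Complex

theorem rotationally_symmetric_rational_support_constant_width
    (m : ℕ) (A B : ℕ → ℝ) (P Q : Polynomial ℝ)
    (hP : P = ∑ k ∈ Finset.range (m + 1), Polynomial.C (A k) * Polynomial.X ^ k)
    (hQ : Q = ∑ k ∈ Finset.range (m + 1), Polynomial.C (B k) * Polynomial.X ^ k)
    (hcoprime : IsCoprime P Q)
    (hQpos : ∀ x : ℝ, 0 ≤ x → 0 < Q.eval x)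
    (hdeg : Q.natDegree = m)
    (w : ℝ) (r : ℂ → ℝ)
    (hr : ∀ ξ : ℂ, r ξ = P.eval (Complex.normSq ξ) / Q.eval (Complex.normSq ξ)) :
    (∀ ξ : ℂ, ξ ≠ 0 → r ξ + r (-1 / (starRingEnd ℂ) ξ) = w) ↔
      ((∀ k : ℕ, k ≤ m → B k = B (m - k)) ∧
       (∀ k : ℕ, k ≤ m → A k + A (m - k) = w * B k)) := by
  have hPm : P.natDegree ≤ m := hP ▸ natDegree_sum_range_C_mul_X_pow_le m A
  have hA : ∀ k ≤ m, P.coeff k = A k := fun k hk => by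
    rw [hP, coeff_sum_range_C_mul_X_pow, if_pos hk]
  have hB : ∀ k ≤ m, Q.coeff k = B k := fun k hk => by
    rw [hQ, coeff_sum_range_C_mul_X_pow, if_pos hk]
  simp only [hr, Complex.normSq_neg_one_div_conj]
  rw [Complex.forall_ne_zero_normSq_iff
      (p := fun t => P.eval t / Q.eval t + P.eval t⁻¹ / Q.eval t⁻¹ = w),
    forall_pos_div_add_div_inv_eq_iff hPm hdeg.le fun t ht => (hQpos t ht.le).ne',
    mul_reflect_add_reflect_mul_eq_iff hcoprime hdeg (hQpos 1 zero_le_one).ne',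
    reflect_eq_self_iff hdeg.le, add_reflect_eq_C_mul_iff hPm hdeg.le]
  refine and_congr (forall₂_congr fun k hk => ?_) (forall₂_congr fun k hk => ?_)
  · rw [hB k hk, hB (m - k) (Nat.sub_le m k)]
  · rw [hA k hk, hA (m - k) (Nat.sub_le m k), hB k hk]
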